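/- arXiv:1910.03740 — 5 statements merged into one kernel-verified Lean document; each statement's English description precedes it below -/
import Mathlib

section
/- Let s ≥ 2 and let K be a clique of size 128 in the Keller graph G_{7,s}. Then exactly 64 vertices of K have first coordinate in {0,1,...,s-1} and exactly 64 vertices of K have first coordinate in {s, s+1, ..., 2s-1}. -/
/-- The Keller graph `G_{n,s}`: vertices are `n`-tuples with entries in `{0,…,2s-1}`,
two vertices adjacent iff they differ by exactly `s` in at least one coordinate
and differ in at least two coordinates. -/
def kellerGraph (n s : ℕ) : SimpleGraph (Fin n → Fin (2 * s)) where
  Adj x y :=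
    (∃ i, (x i : ℕ) + s = (y i : ℕ) ∨ (y i : ℕ) + s = (x i : ℕ)) ∧
    (∃ i j, i ≠ j ∧ x i ≠ y i ∧ x j ≠ y j)
  symm := by
    refine ⟨?_⟩
    rintro x y ⟨⟨i, h⟩, j, k, hjk, hj, hk⟩
    exact ⟨⟨i, Or.symm h⟩, j, k, hjk, hj.symm, hk.symm⟩
  loopless := by
    refine ⟨?_⟩
    rintro x ⟨-, j, k, hjk, hj, hk⟩
    exact hj rfl

/-!
Record for each coordinate of a vertex whether it lies in the lower half `{0,…,s-1}` or the upper
half `{s,…,2s-1}`. Two entries differing by exactly `s` lie in opposite halves, so adjacent vertices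
get different records; a clique is thus mapped injectively into `{0,1}ⁿ`, and a clique of size `2ⁿ`
bijectively. Counting vertices by the half of their `i`-th coordinate then amounts to counting the
points of `{0,1}ⁿ` with prescribed `i`-th entry, of which there are `2ⁿ⁻¹`.
-/

open Finset

theorem Fintype.card_filter_bool_apply_eq {n : ℕ} (i : Fin n) (b : Bool) :
    #{f : Fin n → Bool | f i = b} = 2 ^ (n - 1) := by
  simpa only [Fintype.piFinset_univ, card_univ, Fintype.card_bool, Fintype.card_fin] using
    card_filter_piFinset_const_eq_of_mem (univ : Finset Bool) i (mem_univ b)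

namespace kellerGraph

variable {n s : ℕ} {K : Finset (Fin n → Fin (2 * s))}

def lowHalf (s : ℕ) (v : Fin n → Fin (2 * s)) : Fin n → Bool :=
  fun i => decide ((v i : ℕ) < s)

theorem lowHalf_ne_of_adj {x y : Fin n → Fin (2 * s)} (h : (kellerGraph n s).Adj x y) :
    lowHalf s x ≠ lowHalf s y := by
  obtain ⟨⟨i, hi⟩, -⟩ := h
  intro hxy
  have hxi := congrFun hxy i
  simp only [lowHalf, decide_eq_decide] at hxi
  omega

theorem lowHalf_injOn {K : Set (Fin n → Fin (2 * s))} (hK : (kellerGraph n s).IsClique K) :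
    Set.InjOn (lowHalf s) K :=
  fun _ hx _ hy hxy => by_contra fun hne => lowHalf_ne_of_adj (hK hx hy hne) hxy

theorem image_lowHalf_eq_univ (hK : (kellerGraph n s).IsNClique (2 ^ n) K) :
    K.image (lowHalf s) = univ := by
  apply eq_univ_of_card
  rw [card_image_of_injOn (lowHalf_injOn hK.isClique), hK.card_eq]
  simp

theorem card_filter_lowHalf (hK : (kellerGraph n s).IsNClique (2 ^ n) K)
    (Q : (Fin n → Bool) → Prop) [DecidablePred Q] :
    #{v ∈ K | Q (lowHalf s v)} = #{b | Q b} := by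
  rw [← image_lowHalf_eq_univ hK, filter_image,
    card_image_of_injOn ((lowHalf_injOn hK.isClique).mono (filter_subset _ K))]

theorem card_filter_apply_lt (hK : (kellerGraph n s).IsNClique (2 ^ n) K) (i : Fin n) :
    #{v ∈ K | (v i : ℕ) < s} = 2 ^ (n - 1) := by
  rw [← Fintype.card_filter_bool_apply_eq i true, ← card_filter_lowHalf hK]
  simp [lowHalf]

theorem card_filter_le_apply (hK : (kellerGraph n s).IsNClique (2 ^ n) K) (i : Fin n) :
    #{v ∈ K | s ≤ (v i : ℕ)} = 2 ^ (n - 1) := by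
  rw [← Fintype.card_filter_bool_apply_eq i false, ← card_filter_lowHalf hK]
  simp [lowHalf]

end kellerGraph

theorem keller_clique_split_general (s : ℕ)
    (K : Finset (Fin 7 → Fin (2 * s))) (hK : (kellerGraph 7 s).IsNClique 128 K) :
    (K.filter (fun v => (v 0 : ℕ) < s)).card = 64 ∧
    (K.filter (fun v => s ≤ (v 0 : ℕ))).card = 64 :=
  ⟨kellerGraph.card_filter_apply_lt hK 0, kellerGraph.card_filter_le_apply hK 0⟩

/-- In any clique of size 128 in `G_{7,s}` (`s ≥ 2`), exactly 64 vertices have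
first coordinate in `{0,…,s-1}` and exactly 64 have first coordinate in
`{s,…,2s-1}`. -/
theorem keller_clique_split (s : ℕ) (hs : 2 ≤ s)
    (K : Finset (Fin 7 → Fin (2 * s))) (hK : (kellerGraph 7 s).IsNClique 128 K) :
    (K.filter (fun v => (v 0 : ℕ) < s)).card = 64 ∧
    (K.filter (fun v => s ≤ (v 0 : ℕ))).card = 64 :=
  keller_clique_split_general s K hK
end

section
/- Let d ≥ 1 and let T ⊆ ℝ^d be a collection of cube corners, and fix i ∈ {1,...,d}. Then {C^d(t) : t ∈ T} is a cube tiling of ℝ^d if and only if for every x ∈ ℝ^d the set T_i(x) is an i-lattice. -/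
/-- The half-open unit cube `[x_1, x_1+1) × ⋯ × [x_d, x_d+1)` with corner `x`. -/
def cube (d : ℕ) (x : Fin d → ℝ) : Set (Fin d → ℝ) :=
  {y | ∀ i, x i ≤ y i ∧ y i < x i + 1}

/-- `T` is a cube tiling of `ℝ^d`: the cubes with corners in `T` are pairwise
disjoint and their union is all of `ℝ^d`. -/
def IsTiling (d : ℕ) (T : Set (Fin d → ℝ)) : Prop :=
  (T.Pairwise fun t t' => Disjoint (cube d t) (cube d t')) ∧
  (⋃ t ∈ T, cube d t) = Set.univ

/-- The `i`-th standard basis vector of `ℝ^d`. -/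
def stdBasis (d : ℕ) (i : Fin d) : Fin d → ℝ := fun j => if j = i then 1 else 0

/-- Two cubes (given by their corners `x`, `y`) faceshare if `y = x ± e_i`
for some standard basis vector `e_i`. -/
def Faceshare (d : ℕ) (x y : Fin d → ℝ) : Prop :=
  ∃ i : Fin d, y = x + stdBasis d i ∨ y = x - stdBasis d i

/-- A tiling is faceshare-free if no two distinct cubes of it faceshare. -/
def FaceshareFree (d : ℕ) (T : Set (Fin d → ℝ)) : Prop :=
  ∀ t ∈ T, ∀ t' ∈ T, t ≠ t' → ¬ Faceshare d t t'

/-- A tiling `T` is periodic if `t + 2z ∈ T` for every `t ∈ T` and `z ∈ ℤ^d`. -/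
def PeriodicTiling (d : ℕ) (T : Set (Fin d → ℝ)) : Prop :=
  ∀ t ∈ T, ∀ z : Fin d → ℤ, (fun j => t j + 2 * (z j : ℝ)) ∈ T

/-- A tiling is `s`-discrete if for each coordinate `i`, the values `t i` modulo 1
over `t ∈ T` take at most `s` distinct values. -/
def SDiscrete (d s : ℕ) (T : Set (Fin d → ℝ)) : Prop :=
  ∀ i : Fin d, ∃ S : Finset ℝ, S.card ≤ s ∧ ∀ t ∈ T, Int.fract (t i) ∈ S

/-- The axis-parallel line through `x` in direction `i`. -/
def line (d : ℕ) (i : Fin d) (x : Fin d → ℝ) : Set (Fin d → ℝ) :=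
  {y | ∀ j, j ≠ i → y j = x j}

/-- `T_i(x)`: the corners of `T` whose cubes meet the line `ℓ_i(x)`. -/
def cornersMeetingLine (d : ℕ) (T : Set (Fin d → ℝ)) (i : Fin d) (x : Fin d → ℝ) :
    Set (Fin d → ℝ) :=
  {t | t ∈ T ∧ (cube d t ∩ line d i x).Nonempty}

/-- `S` is an `i`-lattice: there is `a ∈ ℝ` with `t i ≡ a (mod 1)` for all `t ∈ S`,
and for each integer `y` exactly one `t ∈ S` has `t i = a + y`. -/
def IsILattice (d : ℕ) (i : Fin d) (S : Set (Fin d → ℝ)) : Prop :=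
  ∃ a : ℝ, (∀ t ∈ S, ∃ z : ℤ, t i = a + (z : ℝ)) ∧
    ∀ y : ℤ, ∃! t, t ∈ S ∧ t i = a + (y : ℝ)

/-! A point `y` lies in the cube `C(t)` iff `C(t)` meets the line `ℓ_i(y)` and `y i ∈ [t i, t i + 1)`.
Hence `T` tiles `ℝ^d` iff on every line `ℓ_i(x)` the unit intervals `[t i, t i + 1)`, `t ∈ T_i(x)`,
partition `ℝ`; and a family of unit intervals partitions `ℝ` iff its left endpoints form one coset
`a + ℤ`, each point of it being hit once (walking from one interval to the next). -/

theorem isTiling_iff_existsUnique_mem_cube (d : ℕ) (T : Set (Fin d → ℝ)) :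
    IsTiling d T ↔ ∀ y, ∃! t, t ∈ T ∧ y ∈ cube d t := by
  refine ⟨fun ⟨hdisj, hcov⟩ y => ?_, fun h => ⟨?_, ?_⟩⟩
  · obtain ⟨t, ht, hy⟩ := Set.mem_iUnion₂.mp (hcov ▸ Set.mem_univ y)
    refine ⟨t, ⟨ht, hy⟩, fun t' ⟨ht', hy'⟩ => ?_⟩
    by_contra hne
    exact Set.disjoint_left.mp (hdisj ht' ht hne) hy' hy
  · intro t ht t' ht' hne
    refine Set.disjoint_left.mpr fun y hy hy' => hne ?_
    exact (h y).unique ⟨ht, hy⟩ ⟨ht', hy'⟩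
  · refine Set.eq_univ_of_forall fun y => ?_
    obtain ⟨t, ⟨ht, hy⟩, -⟩ := h y
    exact Set.mem_biUnion ht hy

def IsLineTiling (d : ℕ) (i : Fin d) (S : Set (Fin d → ℝ)) : Prop :=
  ∀ r : ℝ, ∃! t, t ∈ S ∧ r ∈ Set.Ico (t i) (t i + 1)

namespace IsLineTiling

variable {d : ℕ} {i : Fin d} {S : Set (Fin d → ℝ)} {t t' : Fin d → ℝ}

theorem eq_of_mem_Ico (hS : IsLineTiling d i S) (ht : t ∈ S) (ht' : t' ∈ S)
    (h : t' i ∈ Set.Ico (t i) (t i + 1)) : t = t' :=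
  (hS (t' i)).unique ⟨ht, h⟩ ⟨ht', le_rfl, lt_add_one _⟩

theorem exists_add_one (hS : IsLineTiling d i S) (ht : t ∈ S) : ∃ t' ∈ S, t' i = t i + 1 := by
  obtain ⟨t', ⟨ht', hle, hlt⟩, -⟩ := hS (t i + 1)
  refine ⟨t', ht', le_antisymm hle ?_⟩
  by_contra! hgt
  have := hS.eq_of_mem_Ico ht ht' ⟨by linarith, hgt⟩
  subst this
  linarith

theorem exists_sub_one (hS : IsLineTiling d i S) (ht : t ∈ S) : ∃ t' ∈ S, t' i = t i - 1 := by
  obtain ⟨u, ⟨hu, hle, hlt⟩, -⟩ := hS (t i - 1)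
  obtain ⟨u', hu', hu'i⟩ := hS.exists_add_one hu
  have : u' = t := hS.eq_of_mem_Ico hu' ht ⟨by linarith, by linarith⟩
  subst this
  exact ⟨u, hu, by linarith⟩

theorem exists_add_int (hS : IsLineTiling d i S) (ht : t ∈ S) (z : ℤ) :
    ∃ t' ∈ S, t' i = t i + z := by
  induction z using Int.induction_on with
  | zero => exact ⟨t, ht, by simp⟩
  | succ n ih =>
    obtain ⟨t', ht', he⟩ := ih
    obtain ⟨t'', ht'', he'⟩ := hS.exists_add_one ht'
    exact ⟨t'', ht'', by rw [he', he]; push_cast; ring⟩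
  | pred n ih =>
    obtain ⟨t', ht', he⟩ := ih
    obtain ⟨t'', ht'', he'⟩ := hS.exists_sub_one ht'
    exact ⟨t'', ht'', by rw [he', he]; push_cast; ring⟩

end IsLineTiling

theorem mem_Ico_add_floor_sub (a r : ℝ) : r ∈ Set.Ico (a + ⌊r - a⌋) (a + ⌊r - a⌋ + 1) :=
  ⟨by linarith [Int.floor_le (r - a)], by linarith [Int.lt_floor_add_one (r - a)]⟩

theorem isILattice_iff_isLineTiling (d : ℕ) (i : Fin d) (S : Set (Fin d → ℝ)) :
    IsILattice d i S ↔ IsLineTiling d i S := by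
  constructor
  · rintro ⟨a, hmod, huniq⟩ r
    have floor_eq {z : ℤ} (h : r ∈ Set.Ico (a + z) (a + z + 1)) : ⌊r - a⌋ = z :=
      Int.floor_eq_iff.mpr ⟨by linarith [h.1], by linarith [h.2]⟩
    obtain ⟨t, ⟨ht, hti⟩, htu⟩ := huniq ⌊r - a⌋
    refine ⟨t, ⟨ht, ?_⟩, fun t' ⟨ht', hr⟩ => htu t' ⟨ht', ?_⟩⟩
    · rw [hti]
      exact mem_Ico_add_floor_sub a r
    · obtain ⟨z, hz⟩ := hmod t' ht'
      rw [hz] at hr ⊢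
      rw [floor_eq hr]
  · intro hS
    obtain ⟨t₀, ⟨ht₀, -⟩, -⟩ := hS 0
    have shift (z : ℤ) : ∃ t ∈ S, t i = t₀ i + z := hS.exists_add_int ht₀ z
    refine ⟨t₀ i, fun t ht => ⟨⌊t i - t₀ i⌋, ?_⟩, fun y => ?_⟩
    · obtain ⟨t', ht', he⟩ := shift ⌊t i - t₀ i⌋
      have : t' = t := hS.eq_of_mem_Ico ht' ht (he ▸ mem_Ico_add_floor_sub (t₀ i) (t i))
      subst this
      exact he
    · obtain ⟨t', ht', he⟩ := shift y
      refine ⟨t', ⟨ht', he⟩, fun s ⟨hs, hse⟩ => ?_⟩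
      exact (hS.eq_of_mem_Ico ht' hs ⟨by rw [he, hse], by rw [he, hse]; linarith⟩).symm

theorem mem_cube_update_iff (d : ℕ) (i : Fin d) (x t : Fin d → ℝ) (r : ℝ) :
    Function.update x i r ∈ cube d t ↔
      (cube d t ∩ line d i x).Nonempty ∧ r ∈ Set.Ico (t i) (t i + 1) := by
  refine ⟨fun h => ⟨⟨_, h, fun j hj => Function.update_of_ne hj r x⟩, by simpa using h i⟩, ?_⟩
  rintro ⟨⟨p, hp, hpx⟩, hr⟩ j
  by_cases hj : j = i
  · subst hj
    simpa using hr
  · rw [Function.update_of_ne hj, ← hpx j hj]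
    exact hp j

theorem tiling_iff_lattice_general (d : ℕ) (T : Set (Fin d → ℝ)) (i : Fin d) :
    IsTiling d T ↔ ∀ x : Fin d → ℝ, IsILattice d i (cornersMeetingLine d T i x) := by
  simp only [isTiling_iff_existsUnique_mem_cube, isILattice_iff_isLineTiling, IsLineTiling,
    cornersMeetingLine, Set.mem_ofPred_eq, and_assoc, ← mem_cube_update_iff]
  refine ⟨fun h x r => h _, fun h y => ?_⟩
  simpa using h y (y i)

/-- For `d ≥ 1` and a fixed coordinate `i`, `T` is a cube tiling of `ℝ^d` iff for
every `x ∈ ℝ^d` the set `T_i(x)` is an `i`-lattice. -/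
theorem tiling_iff_lattice (d : ℕ) (hd : 1 ≤ d) (T : Set (Fin d → ℝ)) (i : Fin d) :
    IsTiling d T ↔ ∀ x : Fin d → ℝ, IsILattice d i (cornersMeetingLine d T i x) :=
  tiling_iff_lattice_general d T i
end

section
/- Let T ⊆ ℝ^d be a cube tiling of ℝ^d. For every integer point x ∈ ℤ^d and every coordinate i ∈ {1,...,d}: if t ∈ T is the unique corner with x ∈ C^d(t) and t' ∈ T is the unique corner with x + e_i ∈ C^d(t'), then t_i + 1 = t'_i. -/
/-! Only the `i`-th coordinate matters. If `t' i < t i + 1`, moving the `i`-th coordinate of `x`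
to `t' i` gives a point of both cubes, so `t = t'`, which is absurd. If `t' i > t i + 1`, the point
obtained by moving it to `t i + 1` lies in some cube `C(s)`; according to whether `s i ≤ x i`, that
cube also contains `x` or `x + e_i`, forcing `s = t` or `s = t'`, and both contradict
`s i ≤ t i + 1 < s i + 1`. -/

open Function

section Cube

variable {d : ℕ}

theorem update_mem_cube {t y : Fin d → ℝ} (hy : y ∈ cube d t) {i : Fin d} {a : ℝ}
    (h₁ : t i ≤ a) (h₂ : a < t i + 1) : update y i a ∈ cube d t := by
  intro j
  rcases eq_or_ne j i with rfl | hj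
  · simp [h₁, h₂]
  · simpa [hj] using hy j

theorem add_stdBasis_eq_update (y : Fin d → ℝ) (i : Fin d) :
    y + stdBasis d i = update y i (y i + 1) := by
  ext j
  rcases eq_or_ne j i with rfl | hj <;> simp [stdBasis, *]

end Cube

namespace IsTiling

variable {d : ℕ} {T : Set (Fin d → ℝ)}

theorem eq_of_mem_cube (hT : IsTiling d T) {s s' p : Fin d → ℝ} (hs : s ∈ T) (hs' : s' ∈ T)
    (hp : p ∈ cube d s) (hp' : p ∈ cube d s') : s = s' := by
  by_contra h
  exact Set.disjoint_left.mp (hT.1 hs hs' h) hp hp'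

theorem exists_mem_cube (hT : IsTiling d T) (p : Fin d → ℝ) : ∃ s ∈ T, p ∈ cube d s := by
  simpa using hT.2.symm.subset (Set.mem_univ p)

variable {t t' y : Fin d → ℝ} {i : Fin d}

theorem add_one_le_of_mem_cube_update (hT : IsTiling d T) (ht : t ∈ T) (hy : y ∈ cube d t)
    (ht' : t' ∈ T) (hy' : update y i (y i + 1) ∈ cube d t') : t i + 1 ≤ t' i := by
  by_contra! hlt
  have hyi := hy i
  have hyi' := by simpa using hy' i
  have hp : update y i (t' i) ∈ cube d t := update_mem_cube hy (by linarith) hlt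
  have hp' : update y i (t' i) ∈ cube d t' := by
    simpa using update_mem_cube hy' le_rfl (lt_add_one (t' i))
  have htt' := hT.eq_of_mem_cube ht ht' hp hp'
  subst htt'
  linarith

theorem le_add_one_of_mem_cube_update (hT : IsTiling d T) (ht : t ∈ T) (hy : y ∈ cube d t)
    (ht' : t' ∈ T) (hy' : update y i (y i + 1) ∈ cube d t') : t' i ≤ t i + 1 := by
  by_contra! hgt
  have hyi := hy i
  have hyi' := by simpa using hy' i
  obtain ⟨s, hs, hp⟩ := hT.exists_mem_cube (update y i (t i + 1))
  have hsi := by simpa using hp i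
  rcases le_or_gt (s i) (y i) with hle | hlt
  · have hys : y ∈ cube d s := by
      simpa using update_mem_cube (a := y i) hp hle (by linarith)
    have hst := hT.eq_of_mem_cube hs ht hys hy
    subst hst
    linarith
  · have hys : update y i (y i + 1) ∈ cube d s := by
      have h := update_mem_cube (a := y i + 1) hp (by linarith) (by linarith)
      rwa [update_idem] at h
    have hst := hT.eq_of_mem_cube hs ht' hys hy'
    subst hst
    linarith

end IsTiling

/-- In a cube tiling, if `t` is the corner of the cube containing the integer
point `x` and `t'` that of the cube containing `x + e_i`, then `t i + 1 = t' i`. -/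
theorem tiling_shift_coord (d : ℕ) (T : Set (Fin d → ℝ)) (hT : IsTiling d T)
    (x : Fin d → ℤ) (i : Fin d) (t t' : Fin d → ℝ)
    (ht : t ∈ T) (hxt : (fun j => (x j : ℝ)) ∈ cube d t)
    (ht' : t' ∈ T) (hxt' : ((fun j => (x j : ℝ)) + stdBasis d i) ∈ cube d t') :
    t i + 1 = t' i := by
  rw [add_stdBasis_eq_update] at hxt'
  exact le_antisymm (hT.add_one_le_of_mem_cube_update ht hxt ht' hxt')
    (hT.le_add_one_of_mem_cube_update ht hxt ht' hxt')
end

section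
/- Let T ⊆ ℝ^d be a cube tiling of ℝ^d. Suppose that for every integer point x ∈ ℤ^d and every coordinate i ∈ {1,...,d}, the cube of T containing x and the cube of T containing x + e_i do not faceshare. Then the tiling is faceshare-free, i.e., no two distinct cubes of the tiling faceshare. -/
/-! If `t` and `t + e_i` are both corners of the tiling, the integer point `⌈t⌉` lies in the
cube of `t` and `⌈t⌉ + e_i` in the cube of `t + e_i`, so the hypothesis at `⌈t⌉` already
forbids this pair. -/

section

variable {d : ℕ}

theorem ceil_mem_cube (t : Fin d → ℝ) : (fun j => (⌈t j⌉ : ℝ)) ∈ cube d t :=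
  fun _ => ⟨Int.le_ceil _, Int.ceil_lt_add_one _⟩

theorem add_mem_cube_add {y t : Fin d → ℝ} (hy : y ∈ cube d t) (v : Fin d → ℝ) :
    y + v ∈ cube d (t + v) := by
  intro j
  simp only [Pi.add_apply]
  constructor <;> linarith [hy j]

theorem faceshare_iff_exists_eq_add_stdBasis {x y : Fin d → ℝ} :
    Faceshare d x y ↔ ∃ i, y = x + stdBasis d i ∨ x = y + stdBasis d i := by
  refine exists_congr fun i => or_congr_right ?_
  constructor <;> rintro rfl <;> abel

end

theorem tiling_faceshareFree_of_integer_points_general (d : ℕ) (T : Set (Fin d → ℝ))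
    (h : ∀ (x : Fin d → ℤ) (i : Fin d) (t t' : Fin d → ℝ), t ∈ T → t' ∈ T →
      (fun j => (x j : ℝ)) ∈ cube d t →
      ((fun j => (x j : ℝ)) + stdBasis d i) ∈ cube d t' → ¬ Faceshare d t t') :
    FaceshareFree d T := by
  have no_pair : ∀ t ∈ T, ∀ i, t + stdBasis d i ∉ T := fun t ht i ht' =>
    h _ i t _ ht ht' (ceil_mem_cube t) (add_mem_cube_add (ceil_mem_cube t) _) ⟨i, .inl rfl⟩
  intro t ht t' ht' _ hfs
  obtain ⟨i, rfl | rfl⟩ := faceshare_iff_exists_eq_add_stdBasis.mp hfs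
  · exact no_pair t ht i ht'
  · exact no_pair t' ht' i ht

/-- If in a cube tiling, for every integer point `x` and coordinate `i`, the cube
containing `x` and the cube containing `x + e_i` do not faceshare, then the
tiling is faceshare-free. -/
theorem tiling_faceshareFree_of_integer_points (d : ℕ) (T : Set (Fin d → ℝ))
    (hT : IsTiling d T)
    (h : ∀ (x : Fin d → ℤ) (i : Fin d) (t t' : Fin d → ℝ), t ∈ T → t' ∈ T →
      (fun j => (x j : ℝ)) ∈ cube d t →
      ((fun j => (x j : ℝ)) + stdBasis d i) ∈ cube d t' → ¬ Faceshare d t t') :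
    FaceshareFree d T :=
  tiling_faceshareFree_of_integer_points_general d T h
end

section
/- For every d ≥ 1: if there exists a faceshare-free cube tiling of ℝ^d, then there exists a periodic faceshare-free cube tiling of ℝ^d. Equivalently, if Keller's conjecture holds for all periodic tilings of ℝ^d, then it holds for all tilings of ℝ^d. -/
/-!
Periodize one direction at a time. Along a line parallel to `e_i` the tiles of a cube tiling start
at the points of some `a + ℤ`, so exactly two consecutive tiles of the line have `i`-th corner
coordinate in `(-1, 1]`; repeated with period `2 e_i` they tile the line again. Doing this on every
line gives a tiling that is `2 e_i`-periodic and keeps the periods already obtained. Two such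
corners differ by less than `2` in coordinate `i`, so a faceshare between new cubes forces a
faceshare between the tiles they were copied from. After all `d` directions the tiling is
`(T ∩ (-1, 1]^d) + 2ℤ^d`.
-/

open Set Function

variable {d : ℕ} {T : Set (Fin d → ℝ)} {i : Fin d}

theorem mem_cube_add_iff {t v y : Fin d → ℝ} : y ∈ cube d (t + v) ↔ y - v ∈ cube d t := by
  refine forall_congr' fun j => ?_
  simp only [Pi.add_apply, Pi.sub_apply]
  constructor <;> rintro ⟨h₁, h₂⟩ <;> constructor <;> linarith

theorem mem_cube_of_eq_of_ne {t p q : Fin d → ℝ} (hp : p ∈ cube d t)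
    (hqp : ∀ j ≠ i, q j = p j) (hi : t i ≤ q i ∧ q i < t i + 1) : q ∈ cube d t := by
  intro j
  rcases eq_or_ne j i with rfl | hj
  · exact hi
  · rw [hqp j hj]
    exact hp j

theorem sub_single_apply_of_ne {y : Fin d → ℝ} {c : ℝ} {j : Fin d} (hj : j ≠ i) :
    (y - Pi.single i c : Fin d → ℝ) j = y j := by
  rw [Pi.sub_apply, Pi.single_eq_of_ne hj, sub_zero]

theorem IsTiling.exists_mem_cube_s15 (hT : IsTiling d T) (y : Fin d → ℝ) :
    ∃ t ∈ T, y ∈ cube d t := by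
  obtain ⟨t, ht, hy⟩ := mem_iUnion₂.mp (hT.2 ▸ mem_univ y)
  exact ⟨t, ht, hy⟩

theorem IsTiling.eq_of_mem_cube_s15 (hT : IsTiling d T) {t s y : Fin d → ℝ} (ht : t ∈ T)
    (hs : s ∈ T) (hyt : y ∈ cube d t) (hys : y ∈ cube d s) : t = s :=
  by_contra fun hne => Set.disjoint_left.mp (hT.1 ht hs hne) hyt hys

theorem isTiling_of_forall (hex : ∀ y, ∃ t ∈ T, y ∈ cube d t)
    (huniq : ∀ t ∈ T, ∀ s ∈ T, ∀ y, y ∈ cube d t → y ∈ cube d s → t = s) :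
    IsTiling d T :=
  ⟨fun t ht s hs hne => Set.disjoint_left.mpr fun y hyt hys => hne (huniq t ht s hs y hyt hys),
    eq_univ_of_forall fun y => by
      obtain ⟨t, ht, hy⟩ := hex y
      exact mem_iUnion₂.mpr ⟨t, ht, hy⟩⟩

/-- `p` and `q` witness that both tiles meet one line parallel to `e_i`. -/
theorem IsTiling.eq_of_abs_sub_lt_one (hT : IsTiling d T) {t s p q : Fin d → ℝ} (ht : t ∈ T)
    (hs : s ∈ T) (hp : p ∈ cube d t) (hq : q ∈ cube d s) (hpq : ∀ j ≠ i, p j = q j)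
    (hts : |t i - s i| < 1) : t = s := by
  rw [abs_sub_lt_iff] at hts
  refine hT.eq_of_mem_cube_s15 (y := update p i (max (t i) (s i))) ht hs ?_ ?_
  · refine mem_cube_of_eq_of_ne hp (fun j hj => update_of_ne hj _ _) ?_
    rw [update_self]
    exact ⟨le_max_left _ _, max_lt (by linarith) (by linarith)⟩
  · refine mem_cube_of_eq_of_ne hq
      (fun j hj => (update_of_ne hj _ _).trans (hpq j hj)) ?_
    rw [update_self]
    exact ⟨le_max_right _ _, max_lt (by linarith) (by linarith)⟩

theorem IsTiling.apply_eq_add_one_of_mem_cube_update (hT : IsTiling d T) {t s p : Fin d → ℝ}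
    (ht : t ∈ T) (hs : s ∈ T) (hp : p ∈ cube d t) (hps : update p i (t i + 1) ∈ cube d s) :
    s i = t i + 1 := by
  have hsi := hps i
  rw [update_self] at hsi
  by_contra hne
  have hlt : s i < t i + 1 := lt_of_le_of_ne hsi.1 hne
  obtain rfl : t = s := hT.eq_of_abs_sub_lt_one ht hs hp hps
    (fun j hj => (update_of_ne hj _ _).symm) (by rw [abs_sub_lt_iff]; constructor <;> linarith)
  linarith

theorem IsTiling.add_two_le_of_add_one_lt (hT : IsTiling d T) {t s p q : Fin d → ℝ}
    (ht : t ∈ T) (hs : s ∈ T) (hp : p ∈ cube d t) (hq : q ∈ cube d s)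
    (hpq : ∀ j ≠ i, p j = q j) (h : s i + 1 < t i) : s i + 2 ≤ t i := by
  by_contra! h'
  obtain ⟨r, hr, hqr⟩ := hT.exists_mem_cube_s15 (update q i (s i + 1))
  have hri : r i = s i + 1 := hT.apply_eq_add_one_of_mem_cube_update hs hr hq hqr
  obtain rfl : t = r := hT.eq_of_abs_sub_lt_one ht hr hp hqr
    (fun j hj => by rw [update_of_ne hj, hpq j hj])
    (by rw [abs_sub_lt_iff]; constructor <;> linarith)
  linarith

def periodization (i : Fin d) (T : Set (Fin d → ℝ)) : Set (Fin d → ℝ) :=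
  {u | ∃ t ∈ T, t i ∈ Ioc (-1) 1 ∧ ∃ k : ℤ, u = t + Pi.single i (2 * k : ℝ)}

theorem IsTiling.exists_mem_cube_periodization (hT : IsTiling d T) (y : Fin d → ℝ) :
    ∃ u ∈ periodization i T, y ∈ cube d u := by
  obtain ⟨t, ht, hyt⟩ := hT.exists_mem_cube_s15 (update y i 0)
  obtain ⟨s, hs, hys⟩ := hT.exists_mem_cube_s15 (update y i (t i + 1))
  have hsi : s i = t i + 1 :=
    hT.apply_eq_add_one_of_mem_cube_update ht hs hyt (by rwa [update_idem])
  have hti := hyt i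
  rw [update_self] at hti
  set k : ℤ := ⌊(y i - t i) / 2⌋
  have hk₁ : (k : ℝ) ≤ (y i - t i) / 2 := Int.floor_le _
  have hk₂ : (y i - t i) / 2 < k + 1 := Int.lt_floor_add_one _
  have hyi : (y - Pi.single i (2 * k : ℝ) : Fin d → ℝ) i = y i - 2 * k := by simp
  by_cases hlow : y i - 2 * k < t i + 1
  · refine ⟨_, ⟨t, ht, ⟨by linarith, by linarith⟩, k, rfl⟩, ?_⟩
    rw [mem_cube_add_iff]
    refine mem_cube_of_eq_of_ne hyt (fun j hj => ?_)
      (by rw [hyi]; constructor <;> linarith)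
    rw [sub_single_apply_of_ne hj, update_of_ne hj]
  · refine ⟨_, ⟨s, hs, ⟨by linarith, by linarith⟩, k, rfl⟩, ?_⟩
    rw [mem_cube_add_iff]
    refine mem_cube_of_eq_of_ne hys (fun j hj => ?_)
      (by rw [hyi]; constructor <;> linarith)
    rw [sub_single_apply_of_ne hj, update_of_ne hj]

theorem IsTiling.le_of_mem_cube_sub_single (hT : IsTiling d T) {t t' y : Fin d → ℝ} {k k' : ℤ}
    (ht : t ∈ T) (ht' : t' ∈ T) (hti : t i ∈ Ioc (-1) 1) (ht'i : t' i ∈ Ioc (-1) 1)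
    (hy : y - Pi.single i (2 * k : ℝ) ∈ cube d t)
    (hy' : y - Pi.single i (2 * k' : ℝ) ∈ cube d t') : k' ≤ k := by
  by_contra! hlt
  have hk : (k : ℝ) + 1 ≤ k' := by exact_mod_cast hlt
  have h₁ := hy i
  have h₂ := hy' i
  simp only [Pi.sub_apply, Pi.single_eq_same] at h₁ h₂
  have := hT.add_two_le_of_add_one_lt ht ht' hy hy'
    (fun j hj => by rw [sub_single_apply_of_ne hj, sub_single_apply_of_ne hj]) (by linarith)
  linarith [hti.2, ht'i.1]

theorem IsTiling.periodization (hT : IsTiling d T) : IsTiling d (periodization i T) := by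
  refine isTiling_of_forall hT.exists_mem_cube_periodization ?_
  rintro _ ⟨t, ht, hti, k, rfl⟩ _ ⟨t', ht', ht'i, k', rfl⟩ y hy hy'
  rw [mem_cube_add_iff] at hy hy'
  obtain rfl : k = k' := le_antisymm (hT.le_of_mem_cube_sub_single ht' ht ht'i hti hy' hy)
    (hT.le_of_mem_cube_sub_single ht ht' hti ht'i hy hy')
  rw [hT.eq_of_mem_cube_s15 ht ht' hy hy']

theorem faceshare_iff {x y : Fin d → ℝ} :
    Faceshare d x y ↔ ∃ j, |y j - x j| = 1 ∧ ∀ l ≠ j, y l = x l := by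
  refine exists_congr fun j => ⟨?_, fun ⟨hj, hl⟩ => ?_⟩
  · rintro (rfl | rfl) <;> simp +contextual [stdBasis]
  · rcases abs_eq zero_le_one |>.mp hj with h | h
    · left
      ext l
      rcases eq_or_ne l j with rfl | hlj <;> simp [stdBasis, *]
      linarith
    · right
      ext l
      rcases eq_or_ne l j with rfl | hlj <;> simp [stdBasis, *]
      linarith

theorem Faceshare.ne {x y : Fin d → ℝ} (h : Faceshare d x y) : x ≠ y := by
  obtain ⟨j, hj, -⟩ := faceshare_iff.mp h
  rintro rfl
  simp at hj

theorem faceshare_add_right_iff {x y v : Fin d → ℝ} :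
    Faceshare d (x + v) (y + v) ↔ Faceshare d x y := by
  simp only [Faceshare, add_right_comm x v, add_sub_right_comm x v, add_left_inj]

theorem abs_eq_one_of_abs_add_two_mul_eq_one {δ : ℝ} {m : ℤ} (h : |δ + 2 * m| = 1)
    (hδ : |δ| < 2) : |δ| = 1 := by
  rw [abs_lt] at hδ
  rw [abs_eq zero_le_one] at h ⊢
  have hm₁ : -2 < m := by
    have : (-2 : ℝ) < m := by rcases h with h | h <;> linarith
    exact_mod_cast this
  have hm₂ : m < 2 := by
    have : (m : ℝ) < 2 := by rcases h with h | h <;> linarith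
    exact_mod_cast this
  obtain rfl | rfl | rfl : m = -1 ∨ m = 0 ∨ m = 1 := by omega
  all_goals push_cast at h; rcases h with h | h
  all_goals first | (left; linarith) | (right; linarith)

theorem faceshare_of_faceshare_add_single {t t' : Fin d → ℝ} {k k' : ℤ}
    (hti : t i ∈ Ioc (-1) 1) (ht'i : t' i ∈ Ioc (-1) 1)
    (h : Faceshare d (t + Pi.single i (2 * k : ℝ)) (t' + Pi.single i (2 * k' : ℝ))) :
    Faceshare d t t' := by
  obtain ⟨j, hj, hl⟩ := faceshare_iff.mp h
  have hδ : |t' i - t i| < 2 := by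
    rw [abs_sub_lt_iff]
    constructor <;> linarith [hti.1, hti.2, ht'i.1, ht'i.2]
  by_cases hji : j = i
  · subst hji
    refine faceshare_iff.mpr ⟨j, ?_, fun l hl' => ?_⟩
    · simp only [Pi.add_apply, Pi.single_eq_same] at hj
      refine abs_eq_one_of_abs_add_two_mul_eq_one (m := k' - k) ?_ hδ
      rw [← hj]; push_cast; ring_nf
    · simpa [Pi.single_eq_of_ne hl'] using hl l hl'
  · have hi := hl i (Ne.symm hji)
    simp only [Pi.add_apply, Pi.single_eq_same] at hi
    obtain rfl : k = k' := by
      rw [abs_lt] at hδ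
      have h₁ : ((k - k' : ℤ) : ℝ) < 1 := by push_cast; linarith
      have h₂ : (-1 : ℝ) < ((k - k' : ℤ) : ℝ) := by push_cast; linarith
      have : k - k' < 1 := by exact_mod_cast h₁
      have : -1 < k - k' := by exact_mod_cast h₂
      omega
    exact faceshare_add_right_iff.mp h

theorem FaceshareFree.periodization (hF : FaceshareFree d T) :
    FaceshareFree d (periodization i T) := by
  rintro _ ⟨t, ht, hti, k, rfl⟩ _ ⟨t', ht', ht'i, k', rfl⟩ - hface
  have h := faceshare_of_faceshare_add_single hti ht'i hface
  exact hF t ht t' ht' h.ne h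

def IsPeriodicIn (i : Fin d) (T : Set (Fin d → ℝ)) : Prop :=
  ∀ t ∈ T, ∀ k : ℤ, t + Pi.single i (2 * k : ℝ) ∈ T

theorem isPeriodicIn_periodization : IsPeriodicIn i (periodization i T) := by
  rintro _ ⟨t, ht, hti, k, rfl⟩ m
  exact ⟨t, ht, hti, k + m, by push_cast; rw [mul_add, Pi.single_add, add_assoc]⟩

theorem IsPeriodicIn.periodization {j : Fin d} (h : IsPeriodicIn j T) (hji : j ≠ i) :
    IsPeriodicIn j (periodization i T) := by
  rintro _ ⟨t, ht, hti, k, rfl⟩ m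
  refine ⟨t + Pi.single j (2 * m : ℝ), h t ht m, ?_, k, add_right_comm _ _ _⟩
  rwa [Pi.add_apply, Pi.single_eq_of_ne (Ne.symm hji), add_zero]

theorem periodicTiling_of_forall_isPeriodicIn (h : ∀ i, IsPeriodicIn i T) :
    PeriodicTiling d T := by
  intro t ht z
  have hsum : ∀ s : Finset (Fin d), t + ∑ i ∈ s, Pi.single i (2 * z i : ℝ) ∈ T := by
    intro s
    induction s using Finset.induction_on with
    | empty => simpa using ht
    | insert i s hi ih =>
      rw [Finset.sum_insert hi, ← add_assoc, add_right_comm]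
      exact h i _ ih (z i)
  have := hsum Finset.univ
  rwa [Finset.univ_sum_single] at this

theorem exists_isTiling_faceshareFree_isPeriodicIn (hT : IsTiling d T) (hF : FaceshareFree d T)
    (S : Finset (Fin d)) :
    ∃ T' : Set (Fin d → ℝ),
      IsTiling d T' ∧ FaceshareFree d T' ∧ ∀ i ∈ S, IsPeriodicIn i T' := by
  induction S using Finset.induction_on with
  | empty => exact ⟨T, hT, hF, by simp⟩
  | insert i S hi ih =>
    obtain ⟨T', hT', hF', hP'⟩ := ih
    refine ⟨periodization i T', hT'.periodization, hF'.periodization, ?_⟩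
    simp only [Finset.mem_insert, forall_eq_or_imp]
    exact ⟨isPeriodicIn_periodization,
      fun j hj => (hP' j hj).periodization (ne_of_mem_of_not_mem hj hi)⟩

theorem periodic_reduction_general (d : ℕ)
    (h : ∃ T : Set (Fin d → ℝ), IsTiling d T ∧ FaceshareFree d T) :
    ∃ T : Set (Fin d → ℝ), IsTiling d T ∧ FaceshareFree d T ∧ PeriodicTiling d T := by
  obtain ⟨T, hT, hF⟩ := h
  obtain ⟨T', hT', hF', hP'⟩ := exists_isTiling_faceshareFree_isPeriodicIn hT hF Finset.univ
  exact ⟨T', hT', hF', periodicTiling_of_forall_isPeriodicIn fun i => hP' i (Finset.mem_univ i)⟩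

/-- If `ℝ^d` (`d ≥ 1`) admits a faceshare-free cube tiling, then it admits a
periodic faceshare-free cube tiling. -/
theorem periodic_reduction (d : ℕ) (hd : 1 ≤ d)
    (h : ∃ T : Set (Fin d → ℝ), IsTiling d T ∧ FaceshareFree d T) :
    ∃ T : Set (Fin d → ℝ), IsTiling d T ∧ FaceshareFree d T ∧ PeriodicTiling d T :=
  periodic_reduction_general d h
end
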